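/- arXiv:1404.5470 — 5 statements merged into one kernel-verified Lean document; each statement's English description precedes it below -/
import Mathlib

section
/- Let f and e be odd positive integers with f dividing e, and let m = 2^(2f) + 1. Then 2^e ≡ 2^f (mod m) if e/f ≡ 1 (mod 4), and 2^e ≡ -2^f (mod m) if e/f ≡ -1 (mod 4). -/
theorem pow_two_mod_m (f e : ℕ) (hf : Odd f) (he : Odd e) (hfpos : 0 < f)
    (hdvd : f ∣ e) :
    (e / f % 4 = 1 → (2 : ℤ) ^ e ≡ 2 ^ f [ZMOD (2 ^ (2 * f) + 1)]) ∧
    (e / f % 4 = 3 → (2 : ℤ) ^ e ≡ -(2 ^ f) [ZMOD (2 ^ (2 * f) + 1)]) := by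
  obtain ⟨q, rfl⟩ := hdvd
  have hq : f * q / f = q := Nat.mul_div_cancel_left q hfpos
  have h1 : (2:ℤ)^(2*f) ≡ -1 [ZMOD ((2:ℤ)^(2*f)+1)] :=
    (Int.modEq_iff_dvd.mpr ⟨-1, by ring⟩)
  have h4 : (2:ℤ)^(4*f) ≡ 1 [ZMOD ((2:ℤ)^(2*f)+1)] := by
    have h := h1.mul h1
    have e1 : (2:ℤ)^(2*f) * 2^(2*f) = 2^(4*f) := by
      rw [← pow_add]; congr 1; ring
    rw [e1] at h
    norm_num at h
    exact h
  constructor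
  · intro h
    rw [hq] at h
    obtain ⟨k, rfl⟩ : ∃ k, q = 4*k+1 := ⟨q/4, by omega⟩
    have hexp : f*(4*k+1) = (4*f)*k + f := by ring
    calc (2:ℤ)^(f*(4*k+1)) = (2^(4*f))^k * 2^f := by rw [hexp, pow_add, pow_mul]
      _ ≡ 1^k * 2^f [ZMOD ((2:ℤ)^(2*f)+1)] := (h4.pow k).mul Int.ModEq.rfl
      _ = 2^f := by ring
  · intro h
    rw [hq] at h
    obtain ⟨k, rfl⟩ : ∃ k, q = 4*k+3 := ⟨q/4, by omega⟩
    have hexp : f*(4*k+3) = (4*f)*k + 2*f + f := by ring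
    calc (2:ℤ)^(f*(4*k+3)) = (2^(4*f))^k * 2^(2*f) * 2^f := by
          rw [hexp, pow_add, pow_add, pow_mul]
      _ ≡ 1^k * (-1) * 2^f [ZMOD ((2:ℤ)^(2*f)+1)] :=
          ((h4.pow k).mul h1).mul Int.ModEq.rfl
      _ = -(2^f) := by ring
end

section
/- Define χ(e) = 1 if e ≡ ±1 (mod 8) and χ(e) = -1 if e ≡ ±3 (mod 8), for odd e. Define a_1(e) = 2^e + χ(e)·2^((e+1)/2) + 1 and a_2(e) = 2^e - χ(e)·2^((e+1)/2) + 1. If f and e are odd positive integers with f dividing e, then a_1(f) divides a_1(e) and a_2(f) divides a_2(e). -/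
/-- χ(e) = 1 if e ≡ ±1 (mod 8), χ(e) = -1 if e ≡ ±3 (mod 8). -/
def suzukiChi (e : ℕ) : ℤ := if e % 8 = 1 ∨ e % 8 = 7 then 1 else -1

/-- a₁(e) = 2^e + χ(e)·2^((e+1)/2) + 1, the order of the torus A₁(e). -/
def suzukiA1 (e : ℕ) : ℤ := 2 ^ e + suzukiChi e * 2 ^ ((e + 1) / 2) + 1

/-- a₂(e) = 2^e - χ(e)·2^((e+1)/2) + 1, the order of the torus A₂(e). -/
def suzukiA2 (e : ℕ) : ℤ := 2 ^ e - suzukiChi e * 2 ^ ((e + 1) / 2) + 1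

lemma suzukiChi_pm (m : ℕ) : suzukiChi m = 1 ∨ suzukiChi m = -1 := by
  unfold suzukiChi; split <;> simp

lemma suzukiChi_mul (f n : ℕ) (hf : Odd f) (hn : Odd n) :
    suzukiChi (f * n) = suzukiChi f * suzukiChi n := by
  have h8 : (f * n) % 8 = (f % 8) * (n % 8) % 8 := Nat.mul_mod f n 8
  have hf8 : f % 8 = 1 ∨ f % 8 = 3 ∨ f % 8 = 5 ∨ f % 8 = 7 := by
    obtain ⟨a, ha⟩ := id hf; omega
  have hn8 : n % 8 = 1 ∨ n % 8 = 3 ∨ n % 8 = 5 ∨ n % 8 = 7 := by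
    obtain ⟨a, ha⟩ := hn; omega
  unfold suzukiChi
  rcases hf8 with h | h | h | h <;> rcases hn8 with h' | h' | h' | h' <;>
    rw [h, h'] at h8 <;> norm_num at h8 <;> simp [h, h', h8]

lemma key (f k F : ℕ) (s : ℤ) (hs : s = 1 ∨ s = -1) (hF : f + 1 = 2 * F) :
    (2 ^ f + s * 2 ^ F + 1 : ℤ) ∣
      2 ^ (f * (2 * k + 1)) + s * suzukiChi (2 * k + 1) * 2 ^ (f * k + F) + 1 := by
  set d : ℤ := 2 ^ f + s * 2 ^ F + 1 with hd
  set v : ℤ := -(s * 2 ^ F + 1) with hv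
  clear_value d v
  have hs2 : s * s = 1 := by rcases hs with h | h <;> rw [h] <;> norm_num
  have h2F : (2:ℤ) ^ F * 2 ^ F = 2 * 2 ^ f := by
    rw [← pow_add, show F + F = f + 1 from by omega, pow_succ]; ring
  have hv2' : v ^ 2 + 1 = 2 * d := by
    have h : v ^ 2 + 1 = s * s * (2 ^ F * 2 ^ F) + 2 * (s * 2 ^ F) + 2 := by rw [hv]; ring
    rw [h, hs2, h2F, hd]; ring
  have hv2 : d ∣ v ^ 2 + 1 := ⟨2, by linarith⟩
  have h1 : (2 : ℤ) ^ f ≡ v [ZMOD d] := Int.modEq_iff_dvd.mpr ⟨-1, by rw [hd, hv]; ring⟩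
  have h2 : v ^ 2 ≡ -1 [ZMOD d] := Int.modEq_iff_dvd.mpr (by
    rw [show (-1 : ℤ) - v ^ 2 = -(v ^ 2 + 1) from by ring]; exact dvd_neg.mpr hv2)
  have hsF : s * (2:ℤ) ^ F = -v - 1 := by rw [hv]; ring
  have hA : (2:ℤ) ^ (f * (2 * k + 1)) ≡ (-1) ^ k * v [ZMOD d] := by
    calc (2:ℤ) ^ (f * (2 * k + 1)) = ((2:ℤ) ^ f) ^ (2 * k + 1) := by rw [← pow_mul]
      _ ≡ v ^ (2 * k + 1) [ZMOD d] := h1.pow _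
      _ = (v ^ 2) ^ k * v := by ring
      _ ≡ (-1) ^ k * v [ZMOD d] := (h2.pow k).mul_right v
  have hB : s * (2:ℤ) ^ (f * k + F) ≡ v ^ k * (-v - 1) [ZMOD d] := by
    calc s * (2:ℤ) ^ (f * k + F) = ((2:ℤ) ^ f) ^ k * (s * 2 ^ F) := by
            rw [pow_add, pow_mul]; ring
      _ ≡ v ^ k * (s * 2 ^ F) [ZMOD d] := ((h1.pow k).mul_right _)
      _ = v ^ k * (-v - 1) := by rw [hsF]
  obtain ⟨q, r, hr, hk⟩ : ∃ q r, r < 4 ∧ k = 4 * q + r :=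
    ⟨k / 4, k % 4, Nat.mod_lt _ (by norm_num), by omega⟩
  have hvk : v ^ k ≡ v ^ r [ZMOD d] := by
    calc v ^ k = (v ^ 2) ^ (2 * q) * v ^ r := by
            rw [hk, show 4 * q + r = 2 * (2 * q) + r from by ring, pow_add, pow_mul]
      _ ≡ (-1) ^ (2 * q) * v ^ r [ZMOD d] := (h2.pow _).mul_right _
      _ = v ^ r := by rw [pow_mul]; norm_num
  have hm1 : ((-1 : ℤ)) ^ k = (-1) ^ r := by
    rw [hk, pow_add, pow_mul]; norm_num
  have hT : (2:ℤ) ^ (f * (2 * k + 1)) + s * suzukiChi (2 * k + 1) * 2 ^ (f * k + F) + 1 ≡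
      (-1) ^ r * v + suzukiChi (2 * k + 1) * (v ^ r * (-v - 1)) + 1 [ZMOD d] := by
    have hB2 : s * (2:ℤ) ^ (f * k + F) ≡ v ^ r * (-v - 1) [ZMOD d] :=
      hB.trans (hvk.mul_right (-v - 1))
    have := (hA.add (hB2.mul_left (suzukiChi (2 * k + 1)))).add_right (1 : ℤ)
    rw [hm1] at this
    calc (2:ℤ) ^ (f * (2 * k + 1)) + s * suzukiChi (2 * k + 1) * 2 ^ (f * k + F) + 1
        = (2:ℤ) ^ (f * (2 * k + 1)) + suzukiChi (2 * k + 1) * (s * 2 ^ (f * k + F)) + 1 := by ring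
      _ ≡ (-1) ^ r * v + suzukiChi (2 * k + 1) * (v ^ r * (-v - 1)) + 1 [ZMOD d] := this
  rw [← Int.modEq_zero_iff_dvd]
  refine hT.trans (Int.modEq_zero_iff_dvd.mpr ?_)
  interval_cases r
  · have hc : suzukiChi (2 * k + 1) = 1 := by
      unfold suzukiChi; rw [show (2 * k + 1) % 8 = 1 from by omega]; norm_num
    rw [hc]; exact ⟨0, by ring⟩
  · have hc : suzukiChi (2 * k + 1) = -1 := by
      unfold suzukiChi; rw [show (2 * k + 1) % 8 = 3 from by omega]; norm_num
    rw [hc]; exact ⟨2, by linarith [hv2']⟩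
  · have hc : suzukiChi (2 * k + 1) = -1 := by
      unfold suzukiChi; rw [show (2 * k + 1) % 8 = 5 from by omega]; norm_num
    rw [hc]; exact ⟨2 * (v + 1), by nlinarith [hv2']⟩
  · have hc : suzukiChi (2 * k + 1) = 1 := by
      unfold suzukiChi; rw [show (2 * k + 1) % 8 = 7 from by omega]; norm_num
    rw [hc]; exact ⟨2 * (-(v ^ 2 + v - 1)), by nlinarith [hv2']⟩

theorem suzuki_torus_order_dvd (f e : ℕ) (hf : Odd f) (he : Odd e)
    (hfpos : 0 < f) (hepos : 0 < e) (hdvd : f ∣ e) :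
    suzukiA1 f ∣ suzukiA1 e ∧ suzukiA2 f ∣ suzukiA2 e := by
  obtain ⟨n, hn⟩ := hdvd
  have hnodd : Odd n := by
    rcases Nat.even_or_odd n with h | h
    · exfalso; rw [hn] at he; exact (Nat.not_even_iff_odd.mpr he) (h.mul_left f)
    · exact h
  obtain ⟨k, hkk⟩ := hnodd
  obtain ⟨a, ha⟩ := id hf
  have hF : f + 1 = 2 * ((f + 1) / 2) := by omega
  set F := (f + 1) / 2 with hFdef
  have he2 : e = 2 * (f * k) + f := by rw [hn, hkk]; ring
  have hE : (e + 1) / 2 = f * k + F := by omega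
  have hef : e = f * (2 * k + 1) := by rw [hn, hkk]
  have hχ : suzukiChi e = suzukiChi f * suzukiChi (2 * k + 1) := by
    rw [hef]; exact suzukiChi_mul f (2 * k + 1) hf ⟨k, by ring⟩
  constructor
  · have h := key f k F (suzukiChi f) (suzukiChi_pm f) hF
    have e1 : suzukiA1 f = 2 ^ f + suzukiChi f * 2 ^ F + 1 := rfl
    have e2 : suzukiA1 e = 2 ^ (f * (2 * k + 1)) +
        suzukiChi f * suzukiChi (2 * k + 1) * 2 ^ (f * k + F) + 1 := by
      unfold suzukiA1; rw [hE, hχ, hef]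
    rw [e1, e2]; exact h
  · have h := key f k F (-suzukiChi f)
      (by rcases suzukiChi_pm f with h | h <;> rw [h] <;> norm_num) hF
    have e1 : suzukiA2 f = 2 ^ f + (-suzukiChi f) * 2 ^ F + 1 := by
      unfold suzukiA2; rw [hFdef]; ring
    have e2 : suzukiA2 e = 2 ^ (f * (2 * k + 1)) +
        (-suzukiChi f) * suzukiChi (2 * k + 1) * 2 ^ (f * k + F) + 1 := by
      unfold suzukiA2; rw [hE, hχ, hef]; ring
    rw [e1, e2]; exact h
end

section
/- Let F be a finite field of order 2^e with e odd, K a subfield of F, θ the automorphism x ↦ x^(2^((e+1)/2)), and φ(x) = x + θ(x). If α ∈ F satisfies φ(α) ∈ K, then α ∈ K. -/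
open Polynomial

-- Last step: fixed points of x ↦ x^(card K) lie in K.
theorem mem_of_pow_card_eq {F : Type*} [Field F] [Fintype F] (K : Subfield F)
    [Fintype K] (α : F) (hα : α ^ Fintype.card K = α) : α ∈ K := by
  classical
  set q := Fintype.card K with hq
  have hq2 : 1 < q := Fintype.one_lt_card
  have hKfix : ∀ x ∈ K, x ^ q = x := by
    intro x hx
    have := FiniteField.pow_card (⟨x, hx⟩ : K)
    exact congrArg (Subtype.val) this
  set p : F[X] := X ^ q - X with hp
  have hpne : p ≠ 0 := FiniteField.X_pow_card_sub_X_ne_zero F hq2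
  set S : Finset F := Finset.univ.filter (· ∈ K) with hS
  set T : Finset F := Finset.univ.filter (fun x => x ^ q = x) with hT
  have hST : S ⊆ T := by
    intro x hx
    simp only [hS, hT, Finset.mem_filter, Finset.mem_univ, true_and] at *
    exact hKfix x hx
  have hScard : S.card = q := by
    rw [hS, hq]
    exact (Fintype.card_of_subtype _ (by simp)).symm
  have hTsub : T ⊆ p.roots.toFinset := by
    intro x hx
    simp only [hT, Finset.mem_filter, Finset.mem_univ, true_and] at hx
    rw [Multiset.mem_toFinset, mem_roots hpne]
    simp [hp, hx]
  have hTcard : T.card ≤ q := by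
    calc T.card ≤ p.roots.toFinset.card := Finset.card_le_card hTsub
      _ ≤ p.roots.card := p.roots.toFinset_card_le
      _ ≤ p.natDegree := p.card_roots'
      _ = q := FiniteField.X_pow_card_sub_X_natDegree_eq F hq2
  have hTS : T = S := (Finset.eq_of_subset_of_card_le hST (hScard ▸ hTcard)).symm
  have : α ∈ T := by simp [hT, hα]
  rw [hTS, hS] at this
  simpa using this

theorem suzuki_phi_preimage_subfield (e : ℕ) (he : Odd e) (F : Type*) [Field F]
    [Fintype F] (hcard : Fintype.card F = 2 ^ e) (K : Subfield F) (α : F)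
    (h : α + α ^ (2 ^ ((e + 1) / 2)) ∈ K) : α ∈ K := by
  classical
  haveI : Fintype K := Fintype.ofFinite K
  have he0 : e ≠ 0 := by rintro rfl; simp [Nat.odd_iff] at he
  -- characteristic 2
  have hchar : CharP F 2 := by
    have h20 : (2 : F) ^ e = 0 := by
      have := FiniteField.cast_card_eq_zero F
      rw [hcard] at this; push_cast at this; exact this
    have h2 : (2 : F) = 0 := pow_eq_zero_iff he0 |>.mp h20
    have hdvd : ringChar F ∣ 2 := ringChar.dvd (by exact_mod_cast h2)
    have hprime : (ringChar F).Prime := CharP.char_is_prime F (ringChar F)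
    have : ringChar F = 2 := (Nat.prime_dvd_prime_iff_eq hprime Nat.prime_two).mp hdvd
    exact this ▸ ringChar.charP F
  haveI := hchar
  haveI : Fact (Nat.Prime 2) := ⟨Nat.prime_two⟩
  obtain ⟨k, hk⟩ := he
  set m := (e + 1) / 2 with hm
  have hmm : m + m = e + 1 := by omega
  -- φ(φ(α)) = α + α²
  set β := α + α ^ (2 ^ m) with hβ
  have hββ : β + β ^ (2 ^ m) = α + α ^ 2 := by
    have h1 : β ^ (2 ^ m) = α ^ (2 ^ m) + (α ^ (2 ^ m)) ^ (2 ^ m) := add_pow_char_pow ..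
    have h2 : (α ^ (2 ^ m)) ^ (2 ^ m) = α ^ 2 := by
      rw [← pow_mul, ← pow_add, hmm, pow_succ, pow_mul, ← hcard, FiniteField.pow_card]
    rw [h1, h2, hβ]; ring_nf
    rw [show α ^ 2 ^ m * 2 = α ^ 2 ^ m + α ^ 2 ^ m by ring, CharTwo.add_self_eq_zero]
    ring
  have hc : α + α ^ 2 ∈ K := hββ ▸ K.add_mem h (K.pow_mem h _)
  -- q = card K = 2^f, with f * d = e, d odd
  set q := Fintype.card K with hq
  set d := Module.finrank K F with hd
  have hcard2 : q ^ d = 2 ^ e := by rw [← hcard]; exact (Module.card_eq_pow_finrank).symm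
  have hd0 : d ≠ 0 := by
    rintro hd0
    rw [hd0, pow_zero] at hcard2
    have h1 : (1:ℕ) < 2 ^ e := Nat.one_lt_two_pow_iff.mpr he0
    omega
  obtain ⟨f, hfe, hqf⟩ := (Nat.dvd_prime_pow Nat.prime_two).mp
    (hcard2 ▸ dvd_pow_self q hd0)
  have hfd : f * d = e := by
    have : 2 ^ (f * d) = 2 ^ e := by rw [pow_mul, ← hqf, hcard2]
    exact Nat.pow_right_injective le_rfl this
  have hdodd : Odd d := (Nat.odd_mul.mp (hfd ▸ (⟨k, hk⟩ : Odd e))).2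
  have hq2 : q = 2 ^ f := hqf
  -- elements of K are fixed by x ↦ x^q
  have hKfix : ∀ x ∈ K, x ^ q = x := fun x hx =>
    congrArg Subtype.val (FiniteField.pow_card (⟨x, hx⟩ : K))
  -- α^q = α or α^q = α + 1
  have hγ : α ^ q = α ∨ α ^ q = α + 1 := by
    have hcq : (α + α ^ 2) ^ q = α + α ^ 2 := hKfix _ hc
    rw [hq2, add_pow_char_pow, ← pow_mul, mul_comm, pow_mul, ← hq2] at hcq
    set γ := α ^ q with hγdef
    have key : (γ + α) * (γ + α + 1) = 0 := by
      have : γ + γ ^ 2 = α + α ^ 2 := hcq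
      have h2 : (γ + α) ^ 2 + (γ + α) = 0 := by
        rw [add_pow_char (p := 2)]
        rw [show γ ^ 2 + α ^ 2 + (γ + α) = (γ + γ ^ 2) + (α + α ^ 2) by ring, this,
          CharTwo.add_self_eq_zero]
      calc (γ + α) * (γ + α + 1) = (γ + α) ^ 2 + (γ + α) := by ring
        _ = 0 := h2
    have h2f : (2 : F) = 0 := by
      have := CharTwo.add_self_eq_zero (1 : F); linear_combination this
    rcases mul_eq_zero.mp key with h' | h'
    · left; linear_combination h' - α * h2f
    · right; linear_combination h' - (α + 1) * h2f
  rcases hγ with hγ | hγ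
  · exact mem_of_pow_card_eq K α hγ
  · exfalso
    have hiter : ∀ n : ℕ, α ^ q ^ n = α + n := by
      intro n
      induction n with
      | zero => simp
      | succ n ih =>
        have hkn : ((n : F)) ^ q = (n : F) := hKfix _ (natCast_mem K n)
        rw [pow_succ, pow_mul, ih, hq2, add_pow_char_pow, ← hq2, hkn, hγ]
        push_cast; ring
    have := hiter d
    have hqd : α ^ q ^ d = α := by
      rw [show q ^ d = Fintype.card F from hcard2.trans hcard.symm, FiniteField.pow_card]
    rw [hqd, left_eq_add] at this
    have h2d : (2 : ℕ) ∣ d := (CharP.cast_eq_zero_iff F 2 d).mp this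
    rw [Nat.odd_iff] at hdodd
    omega
end

section
/- Let e > 1 be odd, q = 2^e. The expression d_2 = (1/e)·Σ_{f | e} μ(e/f)·2^f·(2^(4f) − 2^(3f) − 9) is a nonnegative integer, where μ is the classical Möbius function. -/
/-!
Writing the summand as `32^f - 16^f - 9·2^f`, the sum is a combination of the sums
`∑_{f ∣ e} μ(e/f) a^f`, each divisible by `e` (Gauss's congruence: at a prime `p` with
`p^k ∥ e`, the Möbius function pairs `f` with `f/p`, and `b^{p^k} ≡ b^{p^{k-1}} mod p^k`).
Positivity: for odd `e` every proper divisor is at most `e/3`, so with `x = 2^e` the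
leading term `x^5 - x^4 - 9x` outweighs the at most `e` remaining terms, each `O(x^2)`.
-/

open Finset ArithmeticFunction ArithmeticFunction.Moebius

theorem Int.prime_pow_succ_dvd_pow_sub_pow {p : ℕ} (hp : p.Prime) (b : ℤ) (k : ℕ) :
    (p : ℤ) ^ (k + 1) ∣ b ^ p ^ (k + 1) - b ^ p ^ k := by
  have : Fact p.Prime := ⟨hp⟩
  have fermat : (p : ℤ) ∣ b ^ p - b := by
    rw [← ZMod.intCast_zmod_eq_zero_iff_dvd]
    push_cast
    rw [ZMod.pow_card, sub_self]
  simpa only [← pow_mul, ← pow_succ'] using dvd_sub_pow_of_dvd_sub fermat k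

theorem sum_divisors_prime_pow_moebius_mul {p : ℕ} (hp : p.Prime) (k : ℕ) (f : ℕ → ℤ) :
    ∑ d ∈ (p ^ (k + 1)).divisors, μ (p ^ (k + 1) / d) * f d = f (p ^ (k + 1)) - f (p ^ k) := by
  rw [Nat.sum_divisors_prime_pow hp, sum_range_succ, sum_range_succ, sum_eq_zero]
  · rw [pow_succ, Nat.mul_div_cancel_left _ (pow_pos hp.pos _),
      Nat.div_self (Nat.mul_pos (pow_pos hp.pos k) hp.pos), moebius_apply_prime hp,
      moebius_apply_one]
    ring
  · intro i hi
    rw [mem_range] at hi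
    rw [Nat.pow_div (by omega) hp.pos, moebius_apply_prime_pow hp (by omega), if_neg (by omega)]
    simp

theorem Nat.Coprime.sum_divisors_moebius_mul {m n : ℕ} (h : m.Coprime n) (f : ℕ → ℤ) :
    ∑ d ∈ (m * n).divisors, μ (m * n / d) * f d
      = ∑ i ∈ m.divisors, ∑ j ∈ n.divisors, μ (m / i) * μ (n / j) * f (i * j) := by
  rw [Nat.divisors_mul, Finset.mul_def, sum_image h.mul_injOn_divisors, sum_product]
  refine sum_congr rfl fun i hi => sum_congr rfl fun j hj => ?_
  have hi := Nat.dvd_of_mem_divisors hi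
  have hj := Nat.dvd_of_mem_divisors hj
  have hcop : (m / i).Coprime (n / j) :=
    (h.coprime_dvd_left (Nat.div_dvd_of_dvd hi)).coprime_dvd_right (Nat.div_dvd_of_dvd hj)
  rw [← Nat.div_mul_div_comm hi hj, isMultiplicative_moebius.map_mul_of_coprime hcop]

theorem sum_divisors_moebius_mul_prime_pow_mul {p m : ℕ} (hp : p.Prime) (hpm : ¬p ∣ m) (k : ℕ)
    (f : ℕ → ℤ) :
    ∑ d ∈ (p ^ (k + 1) * m).divisors, μ (p ^ (k + 1) * m / d) * f d
      = ∑ j ∈ m.divisors, μ (m / j) * (f (p ^ (k + 1) * j) - f (p ^ k * j)) := by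
  have hcop : (p ^ (k + 1)).Coprime m := ((hp.coprime_iff_not_dvd).2 hpm).pow_left _
  rw [hcop.sum_divisors_moebius_mul, sum_comm]
  refine sum_congr rfl fun j _ => ?_
  rw [← sum_divisors_prime_pow_moebius_mul hp k (fun i => f (i * j)), mul_sum]
  exact sum_congr rfl fun i _ => by ring

theorem prime_pow_dvd_sum_divisors_moebius_mul_pow {p m : ℕ} (hp : p.Prime) (hpm : ¬p ∣ m)
    (k : ℕ) (a : ℤ) :
    (p : ℤ) ^ k ∣ ∑ d ∈ (p ^ k * m).divisors, μ (p ^ k * m / d) * a ^ d := by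
  cases k with
  | zero => exact pow_zero (p : ℤ) ▸ one_dvd _
  | succ k =>
    rw [sum_divisors_moebius_mul_prime_pow_mul hp hpm]
    refine dvd_sum fun j _ => Dvd.dvd.mul_left ?_ _
    simpa only [mul_comm _ j, pow_mul] using Int.prime_pow_succ_dvd_pow_sub_pow hp (a ^ j) k

theorem dvd_sum_divisors_moebius_mul_pow (n : ℕ) (a : ℤ) :
    (n : ℤ) ∣ ∑ d ∈ n.divisors, μ (n / d) * a ^ d := by
  rcases eq_or_ne n 0 with rfl | hn
  · simp
  rw [Int.natCast_dvd, Nat.dvd_iff_prime_pow_dvd_dvd]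
  intro p k hp hpk
  obtain ⟨v, m, hpm, rfl⟩ := Nat.exists_eq_pow_mul_and_not_dvd hn p hp.ne_one
  have hkv : p ^ k ∣ p ^ v :=
    (Nat.Coprime.pow_left k ((hp.coprime_iff_not_dvd).2 hpm)).dvd_of_dvd_mul_right hpk
  rw [← Int.natCast_dvd]
  exact (Int.natCast_dvd_natCast.2 hkv).trans (by
    simpa using prime_pow_dvd_sum_divisors_moebius_mul_pow hp hpm v a)

theorem sum_divisors_moebius_mul_nonneg {n : ℕ} (hn : n ≠ 0) {g : ℕ → ℤ}
    (hg : ∑ d ∈ n.properDivisors, |g d| ≤ g n) :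
    0 ≤ ∑ d ∈ n.divisors, μ (n / d) * g d := by
  rw [← Nat.cons_self_properDivisors hn, sum_cons, Nat.div_self (Nat.pos_of_ne_zero hn),
    moebius_apply_one, one_mul]
  have hrest : -∑ d ∈ n.properDivisors, |g d| ≤ ∑ d ∈ n.properDivisors, μ (n / d) * g d := by
    rw [← sum_neg_distrib]
    refine sum_le_sum fun d _ => neg_le_of_abs_le ?_
    rw [abs_mul]
    exact mul_le_of_le_one_left (abs_nonneg _) abs_moebius_le_one
  linarith

theorem Odd.three_mul_le_of_mem_properDivisors {n d : ℕ} (hn : Odd n)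
    (hd : d ∈ n.properDivisors) : 3 * d ≤ n := by
  obtain ⟨⟨c, rfl⟩, hlt⟩ := Nat.mem_properDivisors.1 hd
  have hc : c ≠ 2 := by
    rintro rfl
    exact Nat.not_even_iff_odd.2 hn (even_two.mul_left d)
  have : 3 ≤ c := by
    rcases c with _ | _ | _ | c <;> simp_all
  nlinarith

def suzukiTerm (f : ℕ) : ℤ := 2 ^ f * (2 ^ (4 * f) - 2 ^ (3 * f) - 9)

theorem suzukiTerm_eq (f : ℕ) : suzukiTerm f = 32 ^ f - 16 ^ f - 9 * 2 ^ f := by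
  rw [suzukiTerm, show (32 : ℤ) = 2 ^ 5 by norm_num, show (16 : ℤ) = 2 ^ 4 by norm_num]
  simp only [← pow_mul]
  ring

theorem abs_suzukiTerm_le (f : ℕ) : |suzukiTerm f| ≤ 11 * 32 ^ f := by
  have h16 : (16 : ℤ) ^ f ≤ 32 ^ f := pow_le_pow_left₀ (by norm_num) (by norm_num) f
  have h2 : (2 : ℤ) ^ f ≤ 32 ^ f := pow_le_pow_left₀ (by norm_num) (by norm_num) f
  have : (0 : ℤ) ≤ 2 ^ f := by positivity
  have : (0 : ℤ) ≤ 16 ^ f := by positivity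
  rw [suzukiTerm_eq, abs_le]
  constructor <;> linarith

theorem sum_properDivisors_abs_suzukiTerm_le {e : ℕ} (he : Odd e) :
    ∑ d ∈ e.properDivisors, |suzukiTerm d| ≤ 11 * 8 ^ e := by
  have hterm : ∀ d ∈ e.properDivisors, |suzukiTerm d| ≤ 11 * 4 ^ e := fun d hd => by
    have h5d : 5 * d ≤ 2 * e := by have := he.three_mul_le_of_mem_properDivisors hd; omega
    calc |suzukiTerm d| ≤ 11 * 2 ^ (5 * d) := by simpa [pow_mul] using abs_suzukiTerm_le d
      _ ≤ 11 * 2 ^ (2 * e) := by gcongr; norm_num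
      _ = 11 * 4 ^ e := by rw [pow_mul]; norm_num
  have hcard : (#e.properDivisors : ℤ) ≤ 2 ^ e := by
    have : #e.properDivisors < 2 ^ e :=
      ((card_filter_le _ _).trans (by simp)).trans_lt Nat.lt_two_pow_self
    exact_mod_cast this.le
  calc ∑ d ∈ e.properDivisors, |suzukiTerm d| ≤ #e.properDivisors • (11 * 4 ^ e) :=
        sum_le_card_nsmul _ _ _ hterm
    _ ≤ 2 ^ e * (11 * 4 ^ e) := by rw [nsmul_eq_mul]; gcongr
    _ = 11 * 8 ^ e := by rw [show (8 : ℤ) = 2 * 4 by norm_num, mul_pow]; ring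

theorem eleven_mul_eight_pow_le_suzukiTerm {e : ℕ} (he : 3 ≤ e) : 11 * 8 ^ e ≤ suzukiTerm e := by
  have hx : (8 : ℤ) ≤ 2 ^ e := by
    calc (8 : ℤ) = 2 ^ 3 := by norm_num
      _ ≤ 2 ^ e := pow_le_pow_right₀ (by norm_num) he
  rw [suzukiTerm_eq, show (32 : ℤ) = 2 ^ 5 by norm_num, show (16 : ℤ) = 2 ^ 4 by norm_num,
    show (8 : ℤ) = 2 ^ 3 by norm_num, pow_right_comm _ 5, pow_right_comm _ 4, pow_right_comm _ 3]
  generalize (2 : ℤ) ^ e = x at hx ⊢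
  have hx0 : (0 : ℤ) ≤ x := by linarith
  nlinarith [mul_le_mul_of_nonneg_right hx (pow_nonneg hx0 4),
    mul_le_mul_of_nonneg_right hx (pow_nonneg hx0 3),
    mul_le_mul_of_nonneg_right hx (pow_nonneg hx0 2), mul_le_mul_of_nonneg_right hx hx0]

open ArithmeticFunction ArithmeticFunction.Moebius in
theorem suzuki_d2_nonneg_integer (e : ℕ) (he : Odd e) (he1 : 1 < e) :
    ∃ n : ℕ,
      ∑ f ∈ e.divisors, (μ (e / f) * 2 ^ f * (2 ^ (4 * f) - 2 ^ (3 * f) - 9) : ℤ)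
        = e * n := by
  have he3 : 3 ≤ e := by obtain ⟨k, rfl⟩ := he; omega
  suffices h : ∃ n : ℕ, ∑ f ∈ e.divisors, μ (e / f) * suzukiTerm f = e * n by
    simpa only [suzukiTerm, mul_assoc] using h
  have hdvd : (e : ℤ) ∣ ∑ f ∈ e.divisors, μ (e / f) * suzukiTerm f := by
    simp only [suzukiTerm_eq, mul_sub, sum_sub_distrib, mul_left_comm _ (9 : ℤ), ← mul_sum]
    exact dvd_sub (dvd_sub (dvd_sum_divisors_moebius_mul_pow e 32)
      (dvd_sum_divisors_moebius_mul_pow e 16)) ((dvd_sum_divisors_moebius_mul_pow e 2).mul_left 9)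
  have hnonneg : 0 ≤ ∑ f ∈ e.divisors, μ (e / f) * suzukiTerm f :=
    sum_divisors_moebius_mul_nonneg (by omega)
      ((sum_properDivisors_abs_suzukiTerm_le he).trans (eleven_mul_eight_pow_le_suzukiTerm he3))
  obtain ⟨t, ht⟩ := hdvd
  lift t to ℕ using nonneg_of_mul_nonneg_right (ht ▸ hnonneg) (by positivity)
  exact ⟨t, ht⟩
end

section
/- Let G be a finite group, H ≤ K ≤ G subgroups, and for subgroups X, Y of G let M(X;Y) denote the number of G-conjugates of X contained in Y, and N(X;Y) the number of G-conjugates of Y containing X. Then M(H;K)·M(K;G) = M(H;G)·N(H;K). -/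
/-- `conjClass G H` is the set of `G`-conjugates of the subgroup `H`. -/
def conjClass (G : Type*) [Group G] (H : Subgroup G) : Set (Subgroup G) :=
  {H' | ∃ g : G, H' = Subgroup.map (MulAut.conj g).toMonoidHom H}

namespace ConjCount

variable {G : Type*} [Group G]

/-- Conjugation of a subgroup by `g`. -/
def cmap (g : G) (X : Subgroup G) : Subgroup G :=
  X.map (MulAut.conj g).toMonoidHom

lemma cmap_cmap (a b : G) (X : Subgroup G) : cmap a (cmap b X) = cmap (a * b) X := by
  simp only [cmap, Subgroup.map_map]
  congr 1
  ext x
  simp [mul_assoc]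

lemma cmap_one (X : Subgroup G) : cmap 1 X = X := by
  have : cmap 1 X = X.map (MonoidHom.id G) := by
    unfold cmap; congr 1; ext x; simp
  rw [this, Subgroup.map_id]

lemma cmap_inv_cmap (g : G) (X : Subgroup G) : cmap g⁻¹ (cmap g X) = X := by
  rw [cmap_cmap, inv_mul_cancel, cmap_one]

lemma cmap_cmap_inv (g : G) (X : Subgroup G) : cmap g (cmap g⁻¹ X) = X := by
  rw [cmap_cmap, mul_inv_cancel, cmap_one]

lemma cmap_mono (g : G) {X Y : Subgroup G} (h : X ≤ Y) : cmap g X ≤ cmap g Y :=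
  Subgroup.map_mono h

lemma mem_conjClass_iff {H X : Subgroup G} : X ∈ conjClass G H ↔ ∃ g : G, X = cmap g H :=
  Iff.rfl

lemma cmap_mem {H X : Subgroup G} (g : G) (hX : X ∈ conjClass G H) :
    cmap g X ∈ conjClass G H := by
  obtain ⟨a, rfl⟩ := hX
  refine ⟨g * a, ?_⟩
  show cmap g (cmap a H) = cmap (g * a) H
  exact cmap_cmap g a H

/-- The fiber over a conjugate of `K` is equinumerous with the fiber over `K`. -/
noncomputable def fiberLeftEquiv (H K : Subgroup G) (g : G) :
    {H' : Subgroup G // H' ∈ conjClass G H ∧ H' ≤ cmap g K} ≃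
    {H' : Subgroup G // H' ∈ conjClass G H ∧ H' ≤ K} where
  toFun := fun X => ⟨cmap g⁻¹ X.1, cmap_mem _ X.2.1, by
    have := cmap_mono g⁻¹ X.2.2
    rwa [cmap_inv_cmap] at this⟩
  invFun := fun X => ⟨cmap g X.1, cmap_mem _ X.2.1, cmap_mono g X.2.2⟩
  left_inv := fun X => Subtype.ext (cmap_cmap_inv g X.1)
  right_inv := fun X => Subtype.ext (cmap_inv_cmap g X.1)

/-- The fiber over a conjugate of `H` is equinumerous with the fiber over `H`. -/
noncomputable def fiberRightEquiv (H K : Subgroup G) (g : G) :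
    {K' : Subgroup G // K' ∈ conjClass G K ∧ cmap g H ≤ K'} ≃
    {K' : Subgroup G // K' ∈ conjClass G K ∧ H ≤ K'} where
  toFun := fun X => ⟨cmap g⁻¹ X.1, cmap_mem _ X.2.1, by
    have := cmap_mono g⁻¹ X.2.2
    rwa [cmap_inv_cmap] at this⟩
  invFun := fun X => ⟨cmap g X.1, cmap_mem _ X.2.1, cmap_mono g X.2.2⟩
  left_inv := fun X => Subtype.ext (cmap_cmap_inv g X.1)
  right_inv := fun X => Subtype.ext (cmap_inv_cmap g X.1)

noncomputable def fiberLeftEquiv' (H K Y : Subgroup G) (g : G) (hg : Y = cmap g K) :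
    {H' : Subgroup G // H' ∈ conjClass G H ∧ H' ≤ Y} ≃
    {H' : Subgroup G // H' ∈ conjClass G H ∧ H' ≤ K} :=
  (Equiv.subtypeEquivRight (fun X => by rw [hg])).trans (fiberLeftEquiv H K g)

noncomputable def fiberRightEquiv' (H K Y : Subgroup G) (g : G) (hg : Y = cmap g H) :
    {K' : Subgroup G // K' ∈ conjClass G K ∧ Y ≤ K'} ≃
    {K' : Subgroup G // K' ∈ conjClass G K ∧ H ≤ K'} :=
  (Equiv.subtypeEquivRight (fun X => by rw [hg])).trans (fiberRightEquiv H K g)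

variable (G) in
/-- Pairs `(H', K')` with `H'` conjugate to `H`, `K'` conjugate to `K`, `H' ≤ K'`. -/
def Pairs (H K : Subgroup G) : Set (Subgroup G × Subgroup G) :=
  {p | p.1 ∈ conjClass G H ∧ p.2 ∈ conjClass G K ∧ p.1 ≤ p.2}

noncomputable def pairsEquivLeft (H K : Subgroup G) :
    Pairs G H K ≃ Σ K' : conjClass G K,
      {H' : Subgroup G // H' ∈ conjClass G H ∧ H' ≤ (K' : Subgroup G)} where
  toFun := fun p => ⟨⟨p.1.2, p.2.2.1⟩, ⟨p.1.1, p.2.1, p.2.2.2⟩⟩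
  invFun := fun x => ⟨(x.2.1, x.1.1), x.2.2.1, x.1.2, x.2.2.2⟩
  left_inv := fun _ => rfl
  right_inv := fun _ => rfl

noncomputable def pairsEquivRight (H K : Subgroup G) :
    Pairs G H K ≃ Σ H' : conjClass G H,
      {K' : Subgroup G // K' ∈ conjClass G K ∧ (H' : Subgroup G) ≤ K'} where
  toFun := fun p => ⟨⟨p.1.1, p.2.1⟩, ⟨p.1.2, p.2.2.1, p.2.2.2⟩⟩
  invFun := fun x => ⟨(x.1.1, x.2.1), x.1.2, x.2.2.1, x.2.2.2⟩
  left_inv := fun _ => rfl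
  right_inv := fun _ => rfl

noncomputable def countLeftEquiv (H K : Subgroup G) :
    Pairs G H K ≃ (conjClass G K) ×
      {H' : Subgroup G // H' ∈ conjClass G H ∧ H' ≤ K} :=
  (pairsEquivLeft H K).trans <|
    (Equiv.sigmaCongrRight (fun (K' : conjClass G K) =>
      fiberLeftEquiv' H K (K' : Subgroup G) (K'.property).choose (K'.property).choose_spec)).trans
    (Equiv.sigmaEquivProd _ _)

noncomputable def countRightEquiv (H K : Subgroup G) :
    Pairs G H K ≃ (conjClass G H) ×
      {K' : Subgroup G // K' ∈ conjClass G K ∧ H ≤ K'} :=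
  (pairsEquivRight H K).trans <|
    (Equiv.sigmaCongrRight (fun (H' : conjClass G H) =>
      fiberRightEquiv' H K (H' : Subgroup G) (H'.property).choose (H'.property).choose_spec)).trans
    (Equiv.sigmaEquivProd _ _)

end ConjCount

theorem conjugate_double_counting (G : Type*) [Group G] [Finite G]
    (H K : Subgroup G) (hHK : H ≤ K) :
    Nat.card {H' : Subgroup G | H' ∈ conjClass G H ∧ H' ≤ K} *
        Nat.card (conjClass G K)
      = Nat.card (conjClass G H) *
        Nat.card {K' : Subgroup G | K' ∈ conjClass G K ∧ H ≤ K'} := by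
  have h1 := Nat.card_congr (ConjCount.countLeftEquiv H K)
  have h2 := Nat.card_congr (ConjCount.countRightEquiv H K)
  rw [Nat.card_prod] at h1 h2
  calc Nat.card {H' : Subgroup G | H' ∈ conjClass G H ∧ H' ≤ K} *
          Nat.card (conjClass G K)
      = Nat.card (conjClass G K) *
          Nat.card {H' : Subgroup G // H' ∈ conjClass G H ∧ H' ≤ K} := by
        rw [mul_comm]; rfl
    _ = Nat.card (ConjCount.Pairs G H K) := h1.symm
    _ = Nat.card (conjClass G H) *
          Nat.card {K' : Subgroup G | K' ∈ conjClass G K ∧ H ≤ K'} := h2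
end
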